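/- For integers 1 ≤ r ≤ t < n, the damping factor λ_{n,t,r} = √(∏_{j=0}^{r-1} ((t-j)(n+j+2))/((n-j)(t+j+2))) satisfies λ_{n,t,r} ≤ exp(−(n−t)·r·(r+1) / (2n(t+r+1))). -/

import Mathlib

/-- `λ_{n,t,r}² := ∏_{j<r} ((t-j)(n+j+2))/((n-j)(t+j+2))`. -/
noncomputable def lamSq (n t r : ℕ) : ℝ :=
  ∏ j ∈ Finset.range r,
    (((t : ℝ) - j) * ((n : ℝ) + j + 2)) / ((((n : ℝ) - j)) * ((t : ℝ) + j + 2))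

/-!
Write each factor of `λ²` as `1 - ε_j` with `ε_j = 2(n-t)(j+1)/((n-j)(t+j+2))`. Since
`(n-j)(t+j+2) ≤ n(t+r+1)` for `j < r`, we have `ε_j ≥ 2(n-t)(j+1)/(n(t+r+1))`, and
`1 - x ≤ exp(-x)` turns the product into `exp(-∑ ε_j) ≤ exp(-(n-t)r(r+1)/(n(t+r+1)))`
because `∑_{j<r} (j+1) = r(r+1)/2`. Taking square roots halves the exponent.
-/

lemma sum_range_cast_add_one (r : ℕ) :
    ∑ j ∈ Finset.range r, ((j : ℝ) + 1) = r * (r + 1) / 2 := by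
  induction r with
  | zero => simp
  | succ k ih =>
    rw [Finset.sum_range_succ, ih]
    push_cast
    ring

lemma damping_factor_eq_one_sub {n t j : ℝ} (hn : n - j ≠ 0) (ht : t + j + 2 ≠ 0) :
    (t - j) * (n + j + 2) / ((n - j) * (t + j + 2))
      = 1 - 2 * (n - t) * (j + 1) / ((n - j) * (t + j + 2)) := by
  field_simp
  ring

section

variable {n t r j : ℕ}

lemma damping_factor_nonneg (hj : j < r) (hrt : r ≤ t) (htn : t < n) :
    0 ≤ ((t : ℝ) - j) * ((n : ℝ) + j + 2) / (((n : ℝ) - j) * ((t : ℝ) + j + 2)) := by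
  have hjt : (j : ℝ) ≤ t := by exact_mod_cast (hj.trans_le hrt).le
  have hjn : (j : ℝ) ≤ n := by exact_mod_cast (hj.trans_le (hrt.trans htn.le)).le
  have : (0 : ℝ) ≤ t - j := sub_nonneg.mpr hjt
  have : (0 : ℝ) ≤ n - j := sub_nonneg.mpr hjn
  positivity

lemma damping_factor_le_exp (hj : j < r) (hrt : r ≤ t) (htn : t < n) :
    ((t : ℝ) - j) * ((n : ℝ) + j + 2) / (((n : ℝ) - j) * ((t : ℝ) + j + 2))
      ≤ Real.exp (-(2 * ((n : ℝ) - t) * (j + 1) / (n * (t + r + 1)))) := by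
  have hjr : (j : ℝ) + 1 ≤ r := by exact_mod_cast hj
  have hjn : (j : ℝ) < n := by exact_mod_cast hj.trans_le (hrt.trans htn.le)
  have htn' : (t : ℝ) ≤ n := by exact_mod_cast htn.le
  have hnj : (0 : ℝ) < n - j := sub_pos.mpr hjn
  have hnt : (0 : ℝ) ≤ n - t := sub_nonneg.mpr htn'
  rw [damping_factor_eq_one_sub hnj.ne' (by positivity)]
  refine (Real.one_sub_le_exp_neg _).trans (Real.exp_le_exp.mpr (neg_le_neg ?_))
  have hden : ((n : ℝ) - j) * (t + j + 2) ≤ n * (t + r + 1) :=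
    mul_le_mul (by linarith) (by linarith) (by positivity) (by positivity)
  exact div_le_div_of_nonneg_left (by positivity) (by positivity) hden

lemma lamSq_le_exp (hrt : r ≤ t) (htn : t < n) :
    lamSq n t r ≤ Real.exp (-(((n : ℝ) - t) * r * (r + 1)) / (n * (t + r + 1))) := by
  have hn : (n : ℝ) ≠ 0 := by exact_mod_cast (Nat.zero_le t).trans_lt htn |>.ne'
  calc lamSq n t r
      ≤ ∏ j ∈ Finset.range r, Real.exp (-(2 * ((n : ℝ) - t) * (j + 1) / (n * (t + r + 1)))) :=
        Finset.prod_le_prod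
          (fun j hj => damping_factor_nonneg (Finset.mem_range.mp hj) hrt htn)
          (fun j hj => damping_factor_le_exp (Finset.mem_range.mp hj) hrt htn)
    _ = Real.exp (-(2 * ((n : ℝ) - t) / (n * (t + r + 1)))
          * ∑ j ∈ Finset.range r, ((j : ℝ) + 1)) := by
        rw [← Real.exp_sum, Finset.mul_sum]
        congr 1
        exact Finset.sum_congr rfl fun j _ => by ring
    _ = Real.exp (-(((n : ℝ) - t) * r * (r + 1)) / (n * (t + r + 1))) := by
        rw [sum_range_cast_add_one]
        congr 1
        field_simp

end

theorem lambda_damping_bound_general (n t r : ℕ) (hrt : r ≤ t) (htn : t < n) :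
    Real.sqrt (lamSq n t r)
      ≤ Real.exp (-(((n : ℝ) - t) * r * (r + 1)) / (2 * n * ((t : ℝ) + r + 1))) :=
  calc Real.sqrt (lamSq n t r)
      ≤ Real.sqrt (Real.exp (-(((n : ℝ) - t) * r * (r + 1)) / (n * (t + r + 1)))) :=
        Real.sqrt_le_sqrt (lamSq_le_exp hrt htn)
    _ = Real.exp (-(((n : ℝ) - t) * r * (r + 1)) / (n * (t + r + 1)) / 2) :=
        (Real.exp_half _).symm
    _ = Real.exp (-(((n : ℝ) - t) * r * (r + 1)) / (2 * n * ((t : ℝ) + r + 1))) := by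
        rw [div_div, mul_comm _ (2 : ℝ), ← mul_assoc]

/-- Damping bound: for `1 ≤ r ≤ t < n`,
`λ_{n,t,r} ≤ exp(-(n-t)·r·(r+1)/(2n(t+r+1)))`. -/
theorem lambda_damping_bound (n t r : ℕ) (hr : 1 ≤ r) (hrt : r ≤ t) (htn : t < n) :
    Real.sqrt (lamSq n t r)
      ≤ Real.exp (-(((n : ℝ) - t) * r * (r + 1)) / (2 * n * ((t : ℝ) + r + 1))) :=
  lambda_damping_bound_general n t r hrt htn
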